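/- arXiv:2101.10374 — 5 statements merged into one kernel-verified Lean document; each statement's English description precedes it below -/
import Mathlib

section
/- Let (π*, B*) be an optimal attacker strategy, and let π be any guessing order with no inversions (i.e., p(π(a))·k(π(b)) ≥ p(π(b))·k(π(a)) for all positions a ≤ b). Then U(π, B*) ≥ U(π*, B*); in particular (π, B*) is also an optimal strategy. -/
open Finset

/-- Success probability λ(π,B): sum of probabilities of the first B guesses. -/
noncomputable def lam (n : ℕ) (p : Fin n → ℝ) (π : Equiv.Perm (Fin n)) (B : ℕ) : ℝ :=
  ∑ t : Fin n, if t.val < B then p (π t) else 0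

/-- Attacker utility U(π,B) = v·λ(π,B) − Σ_{t<B} k(π(t))·(1 − λ(π,t)). -/
noncomputable def U (n : ℕ) (p k : Fin n → ℝ) (v : ℝ) (π : Equiv.Perm (Fin n)) (B : ℕ) : ℝ :=
  v * lam n p π B - ∑ t : Fin n, if t.val < B then k (π t) * (1 - lam n p π t.val) else 0

/-! Exchange argument. Swapping adjacent guesses `a, b` inside the budget changes the utility by
`p b * k a - p a * k b`, so moving a guess of larger bang-for-buck ratio forward never hurts.
Starting from an optimal `(π*, B*)`, make the order agree with `π` one position `m < B*` at a
time: bring `π m` into the budget by exchanging it with the last guess `a`, then bubble it forward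
to position `m`; every guess it passes comes later in `π`, so its ratio is no larger.
The exchange at the budget boundary is where the optimality of `B*` enters: neither dropping `a`
nor adding `π m` after it pays off. -/

lemma sum_ite_val_lt_succ {n : ℕ} {M : Type*} [AddCommMonoid M] (f : Fin n → M) (t : Fin n) :
    ∑ s : Fin n, (if s.val < t.val + 1 then f s else 0)
      = (∑ s : Fin n, if s.val < t.val then f s else 0) + f t := by
  have hfilter : univ.filter (fun s : Fin n => s.val < t.val + 1)
      = insert t (univ.filter fun s : Fin n => s.val < t.val) := by
    ext s; simp [le_iff_eq_or_lt, Fin.val_inj]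
  rw [← sum_filter, ← sum_filter, hfilter, sum_insert (by simp), add_comm]

section Utility

variable {n : ℕ} {p k : Fin n → ℝ} {v : ℝ}

lemma lam_succ (σ : Equiv.Perm (Fin n)) (t : Fin n) :
    lam n p σ (t.val + 1) = lam n p σ t.val + p (σ t) :=
  sum_ite_val_lt_succ _ t

lemma U_succ (σ : Equiv.Perm (Fin n)) (t : Fin n) :
    U n p k v σ (t.val + 1)
      = U n p k v σ t.val + (v * p (σ t) - k (σ t) * (1 - lam n p σ t.val)) := by
  rw [U, U, lam_succ, sum_ite_val_lt_succ (fun s => k (σ s) * (1 - lam n p σ s.val))]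
  ring

lemma lam_le_one (hp : ∀ i, 0 ≤ p i) (hpsum : ∑ i, p i ≤ 1) (σ : Equiv.Perm (Fin n)) (B : ℕ) :
    lam n p σ B ≤ 1 :=
  calc lam n p σ B ≤ ∑ t, p (σ t) := sum_le_sum fun t _ => by split_ifs <;> simp [hp]
    _ = ∑ i, p i := Equiv.sum_comp σ p
    _ ≤ 1 := hpsum

lemma lam_congr {σ τ : Equiv.Perm (Fin n)} {B : ℕ} (h : ∀ t : Fin n, t.val < B → σ t = τ t) :
    lam n p σ B = lam n p τ B :=
  sum_congr rfl fun t _ => by split_ifs with ht; exacts [congrArg p (h t ht), rfl]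

lemma U_congr {σ τ : Equiv.Perm (Fin n)} {B : ℕ} (h : ∀ t : Fin n, t.val < B → σ t = τ t) :
    U n p k v σ B = U n p k v τ B := by
  rw [U, U, lam_congr h]
  congr 1
  refine sum_congr rfl fun t _ => ?_
  split_ifs with ht
  · rw [h t ht, lam_congr fun s hs => h s (hs.trans ht)]
  · rfl

lemma U_sub_U_eq_of_eqOn_ge {σ τ : Equiv.Perm (Fin n)} {B₀ : ℕ}
    (hlam : lam n p σ B₀ = lam n p τ B₀) (h : ∀ t : Fin n, B₀ ≤ t.val → σ t = τ t)
    {B : ℕ} (hB₀ : B₀ ≤ B) (hB : B ≤ n) :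
    U n p k v σ B - U n p k v τ B = U n p k v σ B₀ - U n p k v τ B₀ ∧
      lam n p σ B = lam n p τ B := by
  induction B, hB₀ using Nat.le_induction with
  | base => exact ⟨rfl, hlam⟩
  | succ B hB₀B ih =>
    obtain ⟨hU, hl⟩ := ih (by omega)
    have hσt := h ⟨B, by omega⟩ hB₀B
    have hUσ := U_succ (p := p) (k := k) (v := v) σ ⟨B, by omega⟩
    have hUτ := U_succ (p := p) (k := k) (v := v) τ ⟨B, by omega⟩
    have hlσ := lam_succ (p := p) σ ⟨B, by omega⟩
    have hlτ := lam_succ (p := p) τ ⟨B, by omega⟩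
    simp only at hUσ hUτ hlσ hlτ
    constructor
    · rw [hUσ, hUτ, hσt, hl]; linarith
    · rw [hlσ, hlτ, hσt, hl]

lemma U_mul_swap_adjacent (σ : Equiv.Perm (Fin n)) {i j : Fin n} (hij : j.val = i.val + 1)
    {B : ℕ} (hjB : j.val < B) (hB : B ≤ n) :
    U n p k v (σ * Equiv.swap i j) B
      = U n p k v σ B + (p (σ j) * k (σ i) - p (σ i) * k (σ j)) := by
  set τ := σ * Equiv.swap i j
  have hτi : τ i = σ j := by simp [τ]
  have hτj : τ j = σ i := by simp [τ]
  have hτ : ∀ t, t ≠ i → t ≠ j → τ t = σ t := fun t hi hj => by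
    simp [τ, Equiv.swap_apply_of_ne_of_ne hi hj]
  have hbelow : ∀ t : Fin n, t.val < i.val → τ t = σ t := fun t ht =>
    hτ t (Fin.ne_of_lt ht) (by rintro rfl; omega)
  have hUi : U n p k v τ i = U n p k v σ i := U_congr hbelow
  have hli : lam n p τ i = lam n p σ i := lam_congr hbelow
  have hUτi := U_succ (p := p) (k := k) (v := v) τ i
  have hUτj := U_succ (p := p) (k := k) (v := v) τ j
  have hUσi := U_succ (p := p) (k := k) (v := v) σ i
  have hUσj := U_succ (p := p) (k := k) (v := v) σ j
  have hlτi := lam_succ (p := p) τ i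
  have hlτj := lam_succ (p := p) τ j
  have hlσi := lam_succ (p := p) σ i
  have hlσj := lam_succ (p := p) σ j
  rw [hij] at hUτj hUσj hlτj hlσj
  rw [hτi] at hUτi hlτi
  rw [hτj] at hUτj hlτj
  obtain ⟨hU, -⟩ := U_sub_U_eq_of_eqOn_ge (k := k) (v := v) (σ := τ) (τ := σ) (B₀ := j.val + 1)
    (by rw [hij, hlτj, hlσj, hlτi, hlσi, hli]; ring)
    (fun t ht => hτ t (by rintro rfl; omega) (by rintro rfl; omega)) hjB hB
  rw [hij] at hU
  linear_combination hU + hUτj - hUσj + hUτi - hUσi + hUi + (k (σ i) + k (σ j)) * hli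
    + k (σ i) * hlτi - k (σ j) * hlσi

end Utility

/-- The hypotheses force `pa = 0` and `L = 1`, so both sides vanish. -/
lemma gain_le_gain_of_boundary {v pa pb ka kb L : ℝ} (hv : 0 ≤ v) (hpa : 0 ≤ pa)
    (hka : 0 < ka) (hkb : 0 < kb) (hL : L ≤ 1) (hratio : pa * kb ≤ pb * ka)
    (ha : 0 ≤ v * pa - ka * (1 - L)) (hb : v * pb - kb * (1 - (L + pa)) ≤ 0) :
    v * pa - ka * (1 - L) ≤ v * pb - kb * (1 - L) := by
  have hb0 : 0 ≤ v * pb - kb * (1 - L) := by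
    refine nonneg_of_mul_nonneg_right ?_ hka
    nlinarith [mul_le_mul_of_nonneg_left hratio hv, mul_nonneg hkb.le ha]
  obtain rfl : pa = 0 := le_antisymm (by nlinarith) hpa
  nlinarith

section Exchange

variable {n : ℕ} {p k : Fin n → ℝ} {v M : ℝ} {π σ : Equiv.Perm (Fin n)}

lemma le_U_mul_swap_of_boundary (hp : ∀ i, 0 ≤ p i) (hpsum : ∑ i, p i ≤ 1) (hk : ∀ i, 0 < k i)
    (hv : 0 ≤ v) (hM : ∀ (τ : Equiv.Perm (Fin n)) (B : ℕ), B ≤ n → U n p k v τ B ≤ M)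
    {i s : Fin n} (his : i.val < s.val) (hσ : M ≤ U n p k v σ (i.val + 1))
    (hratio : p (σ i) * k (σ s) ≤ p (σ s) * k (σ i)) :
    M ≤ U n p k v (σ * Equiv.swap i s) (i.val + 1) := by
  set j : Fin n := ⟨i.val + 1, by omega⟩
  set τ := σ * Equiv.swap j s
  set σ' := σ * Equiv.swap i s
  have hτ : ∀ t : Fin n, t.val < i.val + 1 → τ t = σ t := fun t ht => by
    simp [τ, Equiv.swap_apply_of_ne_of_ne (a := j) (b := s) (x := t) (Fin.ne_of_lt ht)
      (Fin.ne_of_lt (by omega))]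
  have hσ' : ∀ t : Fin n, t.val < i.val → σ' t = σ t := fun t ht => by
    simp [σ', Equiv.swap_apply_of_ne_of_ne (Fin.ne_of_lt ht) (Fin.ne_of_lt (ht.trans his))]
  have hτj : τ j = σ s := by simp [τ]
  have hσ'i : σ' i = σ s := by simp [σ']
  -- optimality at the budgets `i` and `i + 2`: dropping `σ i`, or adding `σ s` after it
  have hgain_i : 0 ≤ v * p (σ i) - k (σ i) * (1 - lam n p σ i) := by
    have := hM σ i (by omega)
    rw [U_succ] at hσ
    linarith
  have hgain_s : v * p (σ s) - k (σ s) * (1 - (lam n p σ i + p (σ i))) ≤ 0 := by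
    have := hM τ (j.val + 1) (by omega)
    rw [U_succ, hτj, U_congr hτ, lam_congr hτ, lam_succ] at this
    linarith
  rw [U_succ] at hσ ⊢
  rw [hσ'i, U_congr hσ', lam_congr hσ']
  linarith [gain_le_gain_of_boundary hv (hp (σ i)) (hk (σ i)) (hk (σ s))
    (lam_le_one hp hpsum σ i) hratio hgain_i hgain_s]

lemma le_of_eq_of_eqOn_lt {r s : Fin n} (hσ : ∀ t : Fin n, t.val < r.val → σ t = π t)
    (hσs : σ s = π r) : r ≤ s := by
  by_contra! h
  exact h.ne (π.injective (by rw [← hσ s h, hσs]))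

lemma ratio_le_of_eqOn_lt (hnoinv : ∀ a b : Fin n, a ≤ b → p (π a) * k (π b) ≥ p (π b) * k (π a))
    {r u : Fin n} (hσ : ∀ t : Fin n, t.val < r.val → σ t = π t) (hu : r ≤ u) :
    p (σ u) * k (π r) ≤ p (π r) * k (σ u) := by
  have hr : r ≤ π.symm (σ u) := by
    by_contra! h
    have : σ (π.symm (σ u)) = σ u := by rw [hσ _ h, π.apply_symm_apply]
    exact absurd (σ.injective this ▸ h) (not_lt.2 hu)
  simpa using hnoinv r _ hr

lemma exists_le_U_eqOn_lt_succ
    (hnoinv : ∀ a b : Fin n, a ≤ b → p (π a) * k (π b) ≥ p (π b) * k (π a))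
    {r s : Fin n} {B : ℕ} (hsB : s.val < B) (hB : B ≤ n)
    (hσ : ∀ t : Fin n, t.val < r.val → σ t = π t) (hσs : σ s = π r) :
    ∃ σ' : Equiv.Perm (Fin n), U n p k v σ B ≤ U n p k v σ' B ∧
      ∀ t : Fin n, t.val < r.val + 1 → σ' t = π t := by
  obtain ⟨d, hd⟩ : ∃ d, s.val = r.val + d :=
    ⟨s.val - r.val, by have := le_of_eq_of_eqOn_lt hσ hσs; omega⟩
  induction d generalizing σ s with
  | zero =>
    obtain rfl : s = r := Fin.ext hd
    refine ⟨σ, le_rfl, fun t ht => ?_⟩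
    rcases Nat.lt_succ_iff_lt_or_eq.1 ht with ht | ht
    · exact hσ t ht
    · rw [Fin.ext ht, hσs]
  | succ d ih =>
    set i : Fin n := ⟨s.val - 1, by omega⟩
    have hri : r ≤ i := Fin.le_def.2 (by simp [i]; omega)
    have hswap : ∀ t : Fin n, t.val < r.val → (σ * Equiv.swap i s) t = π t := fun t ht => by
      rw [Equiv.Perm.mul_apply, Equiv.swap_apply_of_ne_of_ne (Fin.ne_of_lt (by simp [i]; omega))
        (Fin.ne_of_lt (by omega)), hσ t ht]
    obtain ⟨σ', hU, hσ'⟩ := ih (s := i) (by simp [i]; omega) hswap (by simp [i, hσs])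
      (by simp [i]; omega)
    refine ⟨σ', le_trans ?_ hU, hσ'⟩
    rw [U_mul_swap_adjacent σ (by simp [i]; omega) hsB hB, hσs]
    linarith [ratio_le_of_eqOn_lt hnoinv hσ hri]

lemma exists_le_U_apply_eq_of_lt (hp : ∀ i, 0 ≤ p i) (hpsum : ∑ i, p i ≤ 1)
    (hk : ∀ i, 0 < k i) (hv : 0 ≤ v)
    (hM : ∀ (τ : Equiv.Perm (Fin n)) (B : ℕ), B ≤ n → U n p k v τ B ≤ M)
    (hnoinv : ∀ a b : Fin n, a ≤ b → p (π a) * k (π b) ≥ p (π b) * k (π a))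
    {r : Fin n} {B : ℕ} (hrB : r.val < B) (hσ : ∀ t : Fin n, t.val < r.val → σ t = π t)
    (hσM : M ≤ U n p k v σ B) :
    ∃ σ' : Equiv.Perm (Fin n), M ≤ U n p k v σ' B ∧
      (∀ t : Fin n, t.val < r.val → σ' t = π t) ∧ ∃ s : Fin n, s.val < B ∧ σ' s = π r := by
  set s := σ.symm (π r)
  have hσs : σ s = π r := σ.apply_symm_apply _
  by_cases hsB : s.val < B
  · exact ⟨σ, hσM, hσ, s, hsB, hσs⟩
  set i : Fin n := ⟨B - 1, by omega⟩
  have hiB : i.val + 1 = B := by simp [i]; omega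
  have hri : r ≤ i := Fin.le_def.2 (by simp [i]; omega)
  have his : i.val < s.val := by omega
  refine ⟨σ * Equiv.swap i s, ?_, fun t ht => ?_, i, by omega, by simp [hσs]⟩
  · rw [← hiB] at hσM ⊢
    refine le_U_mul_swap_of_boundary hp hpsum hk hv hM his hσM ?_
    rw [hσs]
    exact ratio_le_of_eqOn_lt hnoinv hσ hri
  · rw [Equiv.Perm.mul_apply, Equiv.swap_apply_of_ne_of_ne (Fin.ne_of_lt (by omega))
      (Fin.ne_of_lt (by omega)), hσ t ht]

lemma exists_le_U_eqOn_lt (hp : ∀ i, 0 ≤ p i) (hpsum : ∑ i, p i ≤ 1)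
    (hk : ∀ i, 0 < k i) (hv : 0 ≤ v)
    (hM : ∀ (τ : Equiv.Perm (Fin n)) (B : ℕ), B ≤ n → U n p k v τ B ≤ M)
    (hnoinv : ∀ a b : Fin n, a ≤ b → p (π a) * k (π b) ≥ p (π b) * k (π a))
    {B : ℕ} (hB : B ≤ n) (hσM : M ≤ U n p k v σ B) {m : ℕ} (hm : m ≤ B) :
    ∃ σ' : Equiv.Perm (Fin n), M ≤ U n p k v σ' B ∧ ∀ t : Fin n, t.val < m → σ' t = π t := by
  induction m with
  | zero => exact ⟨σ, hσM, fun t ht => absurd ht (Nat.not_lt_zero _)⟩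
  | succ m ih =>
    obtain ⟨σ₁, hσ₁M, hσ₁⟩ := ih (by omega)
    obtain ⟨σ₂, hσ₂M, hσ₂, s, hsB, hσ₂s⟩ := exists_le_U_apply_eq_of_lt hp hpsum hk hv hM hnoinv
      (r := ⟨m, by omega⟩) hm hσ₁ hσ₁M
    obtain ⟨σ₃, hU, hσ₃⟩ := exists_le_U_eqOn_lt_succ hnoinv hsB hB hσ₂ hσ₂s
    exact ⟨σ₃, hσ₂M.trans hU, hσ₃⟩

end Exchange

theorem stmt_0 (n : ℕ) (p k : Fin n → ℝ) (v : ℝ)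
    (hp : ∀ i, 0 ≤ p i) (hpsum : ∑ i, p i ≤ 1) (hk : ∀ i, 0 < k i) (hv : 0 ≤ v)
    (πstar : Equiv.Perm (Fin n)) (Bstar : ℕ) (hBstar : Bstar ≤ n)
    (hopt : ∀ (π : Equiv.Perm (Fin n)) (B : ℕ), B ≤ n →
      U n p k v πstar Bstar ≥ U n p k v π B)
    (π : Equiv.Perm (Fin n))
    (hnoinv : ∀ a b : Fin n, a ≤ b → p (π a) * k (π b) ≥ p (π b) * k (π a)) :
    U n p k v π Bstar ≥ U n p k v πstar Bstar ∧
      ∀ (π' : Equiv.Perm (Fin n)) (B' : ℕ), B' ≤ n →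
        U n p k v π Bstar ≥ U n p k v π' B' := by
  obtain ⟨σ, hσ, hσπ⟩ := exists_le_U_eqOn_lt hp hpsum hk hv hopt hnoinv hBstar le_rfl le_rfl
  have hπ : U n p k v πstar Bstar ≤ U n p k v π Bstar := by
    rwa [U_congr fun t ht => (hσπ t ht).symm]
  exact ⟨hπ, fun π' B' hB' => (hopt π' B' hB').trans hπ⟩
end

section
/- Let π be a guessing order, let a be a position with a + 2 ≤ B ≤ n, and let π' be the ordering obtained from π by transposing the guesses at positions a and a+1 (i.e., π' = π composed with the transposition of a and a+1). Then U(π', B) − U(π, B) = k(π(a))·p(π(a+1)) − k(π(a+1))·p(π(a)), and λ(π', B) = λ(π, B). -/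
open Finset

theorem stmt_2 (n : ℕ) (p k : Fin n → ℝ) (v : ℝ)
    (hp : ∀ i, 0 ≤ p i) (hpsum : ∑ i, p i ≤ 1) (hk : ∀ i, 0 < k i) (hv : 0 ≤ v)
    (π : Equiv.Perm (Fin n)) (B : ℕ) (hB : B ≤ n)
    (a : Fin n) (ha : a.val + 2 ≤ B) :
    U n p k v (π * Equiv.swap a ⟨a.val + 1, by omega⟩) B - U n p k v π B
        = k (π a) * p (π ⟨a.val + 1, by omega⟩) - k (π ⟨a.val + 1, by omega⟩) * p (π a) ∧
      lam n p (π * Equiv.swap a ⟨a.val + 1, by omega⟩) B = lam n p π B := by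
  set a' : Fin n := ⟨a.val + 1, by omega⟩ with ha'
  have hne : a ≠ a' := by
    intro h
    have := congrArg Fin.val h
    simp [ha'] at this
  set σ : Equiv.Perm (Fin n) := Equiv.swap a a' with hσ
  have hsa : σ a = a' := Equiv.swap_apply_left a a'
  have hsa' : σ a' = a := Equiv.swap_apply_right a a'
  have hsother : ∀ t : Fin n, t ≠ a → t ≠ a' → σ t = t := by
    intro t h1 h2; exact Equiv.swap_apply_of_ne_of_ne h1 h2
  -- lam is unchanged at cut points other than a.val + 1
  have hlam : ∀ m : ℕ, m ≠ a.val + 1 → lam n p (π * σ) m = lam n p π m := by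
    intro m hm
    unfold lam
    apply Fintype.sum_equiv σ
    intro t
    simp only [Equiv.Perm.mul_apply]
    have hv2 : a'.val = a.val + 1 := rfl
    by_cases h1 : t = a
    · rw [h1, hsa, if_congr (show (a.val < m ↔ a'.val < m) from by omega) rfl rfl]
    · by_cases h2 : t = a'
      · rw [h2, hsa', if_congr (show (a'.val < m ↔ a.val < m) from by omega) rfl rfl]
      · rw [hsother t h1 h2]
  -- successor formula for lam
  have hsucc : ∀ (τ : Equiv.Perm (Fin n)) (m : ℕ) (hm : m < n),
      lam n p τ (m + 1) = lam n p τ m + p (τ ⟨m, hm⟩) := by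
    intro τ m hm
    unfold lam
    have key : ∀ t : Fin n, (if t.val < m + 1 then p (τ t) else 0)
        = (if t.val < m then p (τ t) else 0) + (if t = ⟨m, hm⟩ then p (τ t) else 0) := by
      intro t
      by_cases h : t = ⟨m, hm⟩
      · subst h; simp
      · have hv' : t.val ≠ m := by
          intro hc; exact h (Fin.ext hc)
        simp only [h, if_false, add_zero]
        rw [if_congr (show (t.val < m + 1 ↔ t.val < m) from by omega) rfl rfl]
    rw [Finset.sum_congr rfl (fun t _ => key t), Finset.sum_add_distrib,
      Finset.sum_ite_eq' Finset.univ (⟨m, hm⟩ : Fin n) (fun t => p (τ t))]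
    simp
  have haB : a.val < B := by omega
  have ha'B : a'.val < B := by simp [ha']; omega
  have han : a.val < n := by omega
  have heta : (⟨a.val, han⟩ : Fin n) = a := Fin.ext rfl
  have hl1 : lam n p π (a.val + 1) = lam n p π a.val + p (π a) := by
    rw [hsucc π a.val han, heta]
  have hl1' : lam n p (π * σ) (a.val + 1) = lam n p π a.val + p (π a') := by
    rw [hsucc (π * σ) a.val han, heta, hlam a.val (by omega)]
    simp [Equiv.Perm.mul_apply, hsa]
  have hlamB : lam n p (π * σ) B = lam n p π B := hlam B (by omega)
  refine ⟨?_, hlamB⟩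
  unfold U
  rw [hlamB]
  have hsum : (∑ t : Fin n, if t.val < B then k ((π * σ) t) * (1 - lam n p (π * σ) t.val) else 0)
      - (∑ t : Fin n, if t.val < B then k (π t) * (1 - lam n p π t.val) else 0)
      = k (π a') * p (π a) - k (π a) * p (π a') := by
    rw [← Finset.sum_sub_distrib]
    have hzero : ∀ x ∈ (Finset.univ : Finset (Fin n)), x ∉ ({a, a'} : Finset (Fin n)) →
        ((if x.val < B then k ((π * σ) x) * (1 - lam n p (π * σ) x.val) else 0)
          - (if x.val < B then k (π x) * (1 - lam n p π x.val) else 0)) = 0 := by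
      intro x _ hx
      simp only [Finset.mem_insert, Finset.mem_singleton, not_or] at hx
      have h1 : (π * σ) x = π x := by
        simp [Equiv.Perm.mul_apply, hsother x hx.1 hx.2]
      have h2 : lam n p (π * σ) x.val = lam n p π x.val := by
        apply hlam
        intro hc
        exact hx.2 (Fin.ext hc)
      rw [h1, h2, sub_self]
    rw [← Finset.sum_subset (Finset.subset_univ ({a, a'} : Finset (Fin n))) hzero,
      Finset.sum_pair hne]
    have hva : lam n p (π * σ) a.val = lam n p π a.val := hlam a.val (by omega)
    simp only [Equiv.Perm.mul_apply, hsa, hsa', haB, ha'B, if_pos]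
    rw [hva]
    have hv2 : a'.val = a.val + 1 := rfl
    rw [hl1, hl1']
    ring
  linarith [hsum]
end

section
/- If (π*, B*) is an optimal attacker strategy and B* < n, then the marginal utility of one additional guess is nonpositive: v·p(π*(B*)) ≤ k(π*(B*))·(1 − λ(π*, B*)). -/
open Finset

theorem stmt_5 (n : ℕ) (p k : Fin n → ℝ) (v : ℝ)
    (hp : ∀ i, 0 ≤ p i) (hpsum : ∑ i, p i ≤ 1) (hk : ∀ i, 0 < k i) (hv : 0 ≤ v)
    (πstar : Equiv.Perm (Fin n)) (Bstar : ℕ)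
    (hopt : ∀ (π : Equiv.Perm (Fin n)) (B : ℕ), B ≤ n →
      U n p k v πstar Bstar ≥ U n p k v π B)
    (hlt : Bstar < n) :
    v * p (πstar ⟨Bstar, hlt⟩) ≤ k (πstar ⟨Bstar, hlt⟩) * (1 - lam n p πstar Bstar) := by
  have key : ∀ f : Fin n → ℝ,
      (∑ t : Fin n, if t.val < Bstar + 1 then f t else 0) =
      (∑ t : Fin n, if t.val < Bstar then f t else 0) + f ⟨Bstar, hlt⟩ := by
    intro f
    have h1 : ∀ t : Fin n, (if t.val < Bstar + 1 then f t else 0) =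
        (if t.val < Bstar then f t else 0) + (if t = ⟨Bstar, hlt⟩ then f t else 0) := by
      intro t
      rcases lt_trichotomy t.val Bstar with h | h | h
      · have ht : t ≠ ⟨Bstar, hlt⟩ := by
          intro he; rw [he] at h; simp at h
        simp [h, ht, Nat.lt_succ_of_lt h]
      · have ht : t = ⟨Bstar, hlt⟩ := by exact Fin.ext h
        simp [ht, h]
      · have ht : t ≠ ⟨Bstar, hlt⟩ := by
          intro he; rw [he] at h; simp at h
        have h2 : ¬ t.val < Bstar + 1 := by omega
        have h3 : ¬ t.val < Bstar := by omega
        simp [h2, h3, ht]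
    rw [Finset.sum_congr rfl (fun t _ => h1 t), Finset.sum_add_distrib,
      Finset.sum_ite_eq' Finset.univ (⟨Bstar, hlt⟩ : Fin n) f]
    simp
  have hU := hopt πstar (Bstar + 1) (by omega)
  have hlam : lam n p πstar (Bstar + 1) = lam n p πstar Bstar + p (πstar ⟨Bstar, hlt⟩) := by
    unfold lam; exact key _
  have hsum : (∑ t : Fin n, if t.val < Bstar + 1 then
        k (πstar t) * (1 - lam n p πstar t.val) else 0) =
      (∑ t : Fin n, if t.val < Bstar then k (πstar t) * (1 - lam n p πstar t.val) else 0)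
        + k (πstar ⟨Bstar, hlt⟩) * (1 - lam n p πstar Bstar) := key _
  unfold U at hU
  rw [hlam, hsum] at hU
  linarith
end

section
/- Suppose additionally that v > 0 and p i > 0 for every password i. If (π*, B*) is an optimal attacker strategy, then every checked password has bang-for-buck ratio at least that of every unchecked password: for all positions a < B* ≤ b < n, p(π*(a))·k(π*(b)) ≥ p(π*(b))·k(π*(a)). -/
open Finset

/-- position map: position A receives the item from position bb, positions in [A,B) shift later -/
def fval (A B bb : ℕ) (s : ℕ) : ℕ :=
  if s = A then bb else if A < s ∧ s ≤ B then s - 1 else if s = bb then B else s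

def gval (A B bb : ℕ) (s : ℕ) : ℕ :=
  if s = bb then A else if A ≤ s ∧ s < B then s + 1 else if s = B then bb else s

lemma fval_lt (A B bb n : ℕ) (hAB : A ≤ B) (hBb : B ≤ bb) (hbn : bb < n)
    (s : ℕ) (hs : s < n) : fval A B bb s < n := by
  unfold fval; split_ifs <;> omega

lemma gval_lt (A B bb n : ℕ) (hAB : A ≤ B) (hBb : B ≤ bb) (hbn : bb < n)
    (s : ℕ) (hs : s < n) : gval A B bb s < n := by
  unfold gval; split_ifs <;> omega

lemma gval_fval (A B bb : ℕ) (hAB : A ≤ B) (hBb : B ≤ bb) (s : ℕ) :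
    gval A B bb (fval A B bb s) = s := by
  unfold fval gval; split_ifs <;> omega

lemma fval_gval (A B bb : ℕ) (hAB : A ≤ B) (hBb : B ≤ bb) (s : ℕ) :
    fval A B bb (gval A B bb s) = s := by
  unfold fval gval; split_ifs <;> omega

/-- The position permutation which inserts the item at position bb into position A,
shifting positions [A, B) one step later; position bb receives the item from position B. -/
def permD (n A B bb : ℕ) (hAB : A ≤ B) (hBb : B ≤ bb) (hbn : bb < n) :
    Equiv.Perm (Fin n) where
  toFun t := ⟨fval A B bb t.val, fval_lt A B bb n hAB hBb hbn t.val t.isLt⟩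
  invFun t := ⟨gval A B bb t.val, gval_lt A B bb n hAB hBb hbn t.val t.isLt⟩
  left_inv t := Fin.ext (gval_fval A B bb hAB hBb t.val)
  right_inv t := Fin.ext (fval_gval A B bb hAB hBb t.val)

lemma lam_comp (n : ℕ) (p : Fin n → ℝ) (π ρ : Equiv.Perm (Fin n)) (B : ℕ) :
    lam n p (ρ.trans π) B = ∑ u : Fin n, if (ρ.symm u).val < B then p (π u) else 0 := by
  rw [← Equiv.sum_comp ρ (fun u => if (ρ.symm u).val < B then p (π u) else 0)]
  unfold lam
  refine Finset.sum_congr rfl fun t _ => ?_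
  simp [Equiv.trans_apply]

lemma U_comp (n : ℕ) (p k : Fin n → ℝ) (v : ℝ) (π ρ : Equiv.Perm (Fin n)) (B : ℕ) :
    U n p k v (ρ.trans π) B =
      v * (∑ u : Fin n, if (ρ.symm u).val < B then p (π u) else 0)
      - ∑ u : Fin n, if (ρ.symm u).val < B then
          k (π u) * (1 - ∑ w : Fin n, if (ρ.symm w).val < (ρ.symm u).val then p (π w) else 0)
        else 0 := by
  unfold U
  rw [lam_comp]
  congr 1
  rw [← Equiv.sum_comp ρ (fun u => if (ρ.symm u).val < B then
      k (π u) * (1 - ∑ w : Fin n, if (ρ.symm w).val < (ρ.symm u).val then p (π w) else 0)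
    else 0)]
  refine Finset.sum_congr rfl fun t _ => ?_
  simp only [Equiv.symm_apply_apply, Equiv.trans_apply]
  rw [lam_comp]

/-- Master computation: utility of the strategy obtained by inserting the item at position bb
into position A, with budget B+1. -/
lemma main_ins (n : ℕ) (p k : Fin n → ℝ) (v : ℝ) (π : Equiv.Perm (Fin n)) (A B bb : ℕ)
    (hAB : A ≤ B) (hBb : B ≤ bb) (hbn : bb < n) :
    U n p k v ((permD n A B bb hAB hBb hbn).trans π) (B + 1)
      = U n p k v π B + v * p (π ⟨bb, hbn⟩)
        - k (π ⟨bb, hbn⟩) * (1 - lam n p π A)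
        + p (π ⟨bb, hbn⟩) * ∑ u : Fin n, if A ≤ u.val ∧ u.val < B then k (π u) else 0 := by
  have hsymm : ∀ u : Fin n, (((permD n A B bb hAB hBb hbn)).symm u).val = gval A B bb u.val :=
    fun u => rfl
  rw [U_comp]
  simp only [hsymm]
  have hsingle : ∀ f : Fin n → ℝ,
      (∑ u : Fin n, if u.val = bb then f u else 0) = f ⟨bb, hbn⟩ := by
    intro f
    rw [Finset.sum_eq_single (⟨bb, hbn⟩ : Fin n)]
    · simp
    · intro u _ hu
      rw [if_neg]
      intro h; exact hu (Fin.ext h)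
    · simp
  have hS1 : (∑ u : Fin n, if gval A B bb u.val < B + 1 then p (π u) else 0)
      = lam n p π B + p (π ⟨bb, hbn⟩) := by
    have h1 : ∀ u : Fin n, (if gval A B bb u.val < B + 1 then p (π u) else 0)
        = (if u.val < B then p (π u) else 0) + (if u.val = bb then p (π u) else 0) := by
      intro u
      unfold gval
      split_ifs <;> (first | ring1 | (exfalso; omega))
    rw [Finset.sum_congr rfl fun u _ => h1 u, Finset.sum_add_distrib, hsingle]
    rfl
  have h3 : ∀ u : Fin n,
      (if gval A B bb u.val < B + 1 then
        k (π u) * (1 - ∑ w : Fin n, if gval A B bb w.val < gval A B bb u.val then p (π w) else 0)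
      else 0)
      = (if u.val < B then k (π u) * (1 - lam n p π u.val) else 0)
        - (if A ≤ u.val ∧ u.val < B then k (π u) * p (π ⟨bb, hbn⟩) else 0)
        + (if u.val = bb then k (π u) * (1 - lam n p π A) else 0) := by
    intro u
    by_cases hbbu : u.val = bb
    · have hg : gval A B bb u.val = A := by unfold gval; rw [if_pos hbbu]
      rw [hg]
      have hin : (∑ w : Fin n, if gval A B bb w.val < A then p (π w) else 0)
          = lam n p π A := by
        unfold lam
        refine Finset.sum_congr rfl fun w _ => ?_
        have : (gval A B bb w.val < A) ↔ (w.val < A) := by unfold gval; split_ifs <;> omega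
        exact if_congr this rfl rfl
      rw [hin, if_pos (by omega : A < B + 1), if_neg (by omega), if_neg (by omega),
        if_pos hbbu]
      ring
    · rcases lt_or_ge u.val A with huA | huA
      · have hg : gval A B bb u.val = u.val := by unfold gval; split_ifs <;> omega
        rw [hg]
        have hin : (∑ w : Fin n, if gval A B bb w.val < u.val then p (π w) else 0)
            = lam n p π u.val := by
          unfold lam
          refine Finset.sum_congr rfl fun w _ => ?_
          have : (gval A B bb w.val < u.val) ↔ (w.val < u.val) := by
            unfold gval; split_ifs <;> omega
          exact if_congr this rfl rfl
        rw [hin, if_pos (by omega : u.val < B + 1), if_pos (by omega : u.val < B),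
          if_neg (by omega), if_neg hbbu]
        ring
      · rcases lt_or_ge u.val B with huB | huB
        · have hg : gval A B bb u.val = u.val + 1 := by unfold gval; split_ifs <;> omega
          rw [hg]
          have hin : (∑ w : Fin n, if gval A B bb w.val < u.val + 1 then p (π w) else 0)
              = lam n p π u.val + p (π ⟨bb, hbn⟩) := by
            have h1 : ∀ w : Fin n, (if gval A B bb w.val < u.val + 1 then p (π w) else 0)
                = (if w.val < u.val then p (π w) else 0)
                  + (if w.val = bb then p (π w) else 0) := by
              intro w
              unfold gval
              split_ifs <;> (first | ring1 | (exfalso; omega))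
            rw [Finset.sum_congr rfl fun w _ => h1 w, Finset.sum_add_distrib, hsingle]
            rfl
          rw [hin, if_pos (by omega : u.val + 1 < B + 1), if_pos (by omega : u.val < B),
            if_pos (by omega : A ≤ u.val ∧ u.val < B), if_neg hbbu]
          ring
        · have hg : ¬ (gval A B bb u.val < B + 1) := by unfold gval; split_ifs <;> omega
          rw [if_neg hg, if_neg (by omega), if_neg (by omega), if_neg hbbu]
          ring
  rw [hS1, Finset.sum_congr rfl fun u _ => h3 u, Finset.sum_add_distrib,
    Finset.sum_sub_distrib]
  have hG : (∑ u : Fin n, if A ≤ u.val ∧ u.val < B then k (π u) * p (π ⟨bb, hbn⟩) else 0)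
      = (∑ u : Fin n, if A ≤ u.val ∧ u.val < B then k (π u) else 0) * p (π ⟨bb, hbn⟩) := by
    rw [Finset.sum_mul]
    refine Finset.sum_congr rfl fun u _ => ?_
    split_ifs <;> ring
  rw [hG, hsingle fun u => k (π u) * (1 - lam n p π A)]
  unfold U
  ring

theorem stmt_8 (n : ℕ) (p k : Fin n → ℝ) (v : ℝ)
    (hp : ∀ i, 0 < p i) (hpsum : ∑ i, p i ≤ 1) (hk : ∀ i, 0 < k i) (hv : 0 < v)
    (πstar : Equiv.Perm (Fin n)) (Bstar : ℕ) (hBstar : Bstar ≤ n)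
    (hopt : ∀ (π : Equiv.Perm (Fin n)) (B : ℕ), B ≤ n →
      U n p k v πstar Bstar ≥ U n p k v π B) :
    ∀ a b : Fin n, a.val < Bstar → Bstar ≤ b.val →
      p (πstar a) * k (πstar b) ≥ p (πstar b) * k (πstar a) := by
  intro a b ha hb
  have hbn : b.val < n := b.isLt
  have hBn : Bstar < n := lt_of_le_of_lt hb hbn
  set A := a.val with hA
  set B := Bstar with hBdef
  set bb := b.val with hbb
  set T : ℝ := ∑ u : Fin n, if A ≤ u.val ∧ u.val < B then k (πstar u) else 0 with hT
  have hT0 : 0 ≤ T := by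
    rw [hT]
    refine Finset.sum_nonneg fun u _ => ?_
    split_ifs
    · exact (hk _).le
    · exact le_refl 0
  -- Inequality (I): inserting b at position A does not help
  have hI : k (πstar b) * (1 - lam n p πstar A) ≥ p (πstar b) * (v + T) := by
    have h1 := main_ins n p k v πstar A B bb (le_of_lt ha) hb hbn
    have h2 := hopt ((permD n A B bb (le_of_lt ha) hb hbn).trans πstar) (B + 1) (by omega)
    rw [h1] at h2
    have hbF : (⟨bb, hbn⟩ : Fin n) = b := Fin.ext hbb.symm
    rw [hbF, ← hT] at h2
    linarith
  -- Inequality (II): deleting the item at position A does not help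
  have hII : p (πstar a) * (v + T - k (πstar a)) ≥ k (πstar a) * (1 - lam n p πstar A) := by
    have hABm : A ≤ B - 1 := by omega
    have hBm : B - 1 < n := by omega
    set ρ' := permD n A (B - 1) (B - 1) hABm (le_refl (B - 1)) hBm with hρ'
    set πE := ρ'.symm.trans πstar with hπE
    have hcomp : ρ'.trans πE = πstar := by
      ext t
      simp [hπE, Equiv.trans_apply, Equiv.apply_symm_apply]
    have hE := hopt πE (B - 1) (by omega)
    have hmain := main_ins n p k v πE A (B - 1) (B - 1) hABm (le_refl (B - 1)) hBm
    rw [← hρ', hcomp, show B - 1 + 1 = B from by omega] at hmain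
    -- the inserted item is πstar a
    have hsymmB : πE ⟨B - 1, hBm⟩ = πstar a := by
      rw [hπE]
      show πstar (ρ'.symm ⟨B - 1, hBm⟩) = πstar a
      congr 1
      apply Fin.ext
      have h1 : (ρ'.symm ⟨B - 1, hBm⟩).val = gval A (B - 1) (B - 1) (B - 1) := by
        rw [hρ']; rfl
      rw [h1]
      unfold gval
      rw [if_pos rfl]
    -- lam of πE at A equals lam of πstar at A
    have hlamE : lam n p πE A = lam n p πstar A := by
      unfold lam
      refine Finset.sum_congr rfl fun t _ => ?_
      split_ifs with htA
      · rw [hπE]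
        show p (πstar (ρ'.symm t)) = p (πstar t)
        congr 2
        apply Fin.ext
        have h1 : (ρ'.symm t).val = gval A (B - 1) (B - 1) t.val := by rw [hρ']; rfl
        rw [h1]
        unfold gval
        split_ifs <;> omega
      · rfl
    -- the shifted cost sum
    have hcond : ∀ w : Fin n,
        ((A ≤ (ρ' w).val ∧ (ρ' w).val < B - 1) ↔ (A < w.val ∧ w.val < B)) := by
      intro w
      have hw : (ρ' w).val = fval A (B - 1) (B - 1) w.val := by rw [hρ']; rfl
      rw [hw]
      unfold fval
      split_ifs <;> omega
    have hre : (∑ u : Fin n, if A ≤ u.val ∧ u.val < B - 1 then k (πE u) else 0)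
        = ∑ w : Fin n, if A < w.val ∧ w.val < B then k (πstar w) else 0 := by
      rw [← Equiv.sum_comp ρ'
        (fun u => if A ≤ u.val ∧ u.val < B - 1 then k (πE u) else 0)]
      refine Finset.sum_congr rfl fun w _ => ?_
      have hval : πE (ρ' w) = πstar w := by
        rw [hπE]
        show πstar (ρ'.symm (ρ' w)) = πstar w
        rw [Equiv.symm_apply_apply]
      rw [hval, if_congr (hcond w) rfl rfl]
    have hdecomp : T = (∑ w : Fin n, if A < w.val ∧ w.val < B then k (πstar w) else 0)
        + k (πstar a) := by
      rw [hT]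
      have h1 : ∀ w : Fin n, (if A ≤ w.val ∧ w.val < B then k (πstar w) else 0)
          = (if A < w.val ∧ w.val < B then k (πstar w) else 0)
            + (if w.val = A then k (πstar w) else 0) := by
        intro w; split_ifs <;> (first | ring1 | (exfalso; omega))
      rw [Finset.sum_congr rfl fun w _ => h1 w, Finset.sum_add_distrib]
      congr 1
      rw [Finset.sum_eq_single a]
      · rw [if_pos hA.symm]
      · intro u _ hu
        rw [if_neg]
        intro h; exact hu (Fin.ext (by omega))
      · intro h; exact absurd (Finset.mem_univ a) h
    have hTsum : (∑ u : Fin n, if A ≤ u.val ∧ u.val < B - 1 then k (πE u) else 0)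
        = T - k (πstar a) := by
      rw [hre, hdecomp]; ring
    rw [hsymmB, hlamE, hTsum] at hmain
    linarith
  -- final algebra
  have hvT : 0 < v + T := by linarith
  nlinarith [mul_le_mul_of_nonneg_left hI.le (hk (πstar a)).le,
    mul_le_mul_of_nonneg_left hII.le (hk (πstar b)).le,
    mul_pos (mul_pos (hk (πstar b)) (hp (πstar a))) (hk (πstar a)), hvT]
end

section
/- Let π be a guessing order, B a budget and c ≥ 1 with B + c ≤ n, and suppose the c consecutive guesses at positions B, B+1, …, B+c−1 all have the same probability q and the same hash cost κ, i.e., p(π(t)) = q and k(π(t)) = κ for all B ≤ t < B + c. Then U(π, B + c) − U(π, B) = v·q·c − κ·c·(1 − λ(π, B)) + κ·q·c·(c − 1)/2. -/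
open Finset

lemma sum_step (n : ℕ) (f : Fin n → ℝ) (m : ℕ) (hm : m < n) :
    (∑ t : Fin n, if t.val < m + 1 then f t else 0)
      = (∑ t : Fin n, if t.val < m then f t else 0) + f ⟨m, hm⟩ := by
  have h : ∀ t : Fin n, (if t.val < m + 1 then f t else 0)
      = (if t.val < m then f t else 0) + (if t = ⟨m, hm⟩ then f t else 0) := by
    intro t
    rcases lt_trichotomy t.val m with h1 | h1 | h1
    · have : t ≠ ⟨m, hm⟩ := by simp [Fin.ext_iff]; omega
      simp [h1, Nat.lt_succ_of_lt h1, this]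
    · have ht : t = ⟨m, hm⟩ := by simp [Fin.ext_iff, h1]
      simp [ht, Nat.lt_irrefl]
    · have h2 : ¬ t.val < m + 1 := by omega
      have h3 : ¬ t.val < m := by omega
      have : t ≠ ⟨m, hm⟩ := by simp [Fin.ext_iff]; omega
      simp [h2, h3, this]
  simp_rw [h]
  rw [Finset.sum_add_distrib, Finset.sum_ite_eq' Finset.univ ⟨m, hm⟩ f]
  simp

lemma lam_step (n : ℕ) (p : Fin n → ℝ) (π : Equiv.Perm (Fin n)) (m : ℕ) (hm : m < n) :
    lam n p π (m + 1) = lam n p π m + p (π ⟨m, hm⟩) := by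
  unfold lam
  exact sum_step n (fun t => p (π t)) m hm

lemma U_step (n : ℕ) (p k : Fin n → ℝ) (v : ℝ) (π : Equiv.Perm (Fin n)) (m : ℕ) (hm : m < n) :
    U n p k v π (m + 1) - U n p k v π m
      = v * p (π ⟨m, hm⟩) - k (π ⟨m, hm⟩) * (1 - lam n p π m) := by
  unfold U
  rw [lam_step n p π m hm, sum_step n (fun t => k (π t) * (1 - lam n p π t.val)) m hm]
  ring

lemma lam_add (n : ℕ) (p : Fin n → ℝ) (π : Equiv.Perm (Fin n)) (B c : ℕ) (hBc : B + c ≤ n)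
    (q : ℝ) (hconst : ∀ t : Fin n, B ≤ t.val → t.val < B + c → p (π t) = q) :
    lam n p π (B + c) = lam n p π B + c * q := by
  induction c with
  | zero => simp
  | succ c ih =>
    have hm : B + c < n := by omega
    rw [show B + (c + 1) = (B + c) + 1 from rfl, lam_step n p π (B + c) hm,
      ih (by omega) (fun t h1 h2 => hconst t h1 (by omega))]
    have := hconst ⟨B + c, hm⟩ (by simp) (by simp)
    rw [this]
    push_cast
    ring

theorem stmt_9 (n : ℕ) (p k : Fin n → ℝ) (v : ℝ)
    (hp : ∀ i, 0 ≤ p i) (hpsum : ∑ i, p i ≤ 1) (hk : ∀ i, 0 < k i) (hv : 0 ≤ v)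
    (π : Equiv.Perm (Fin n)) (B c : ℕ) (hc : 1 ≤ c) (hBc : B + c ≤ n)
    (q κ : ℝ)
    (hconst : ∀ t : Fin n, B ≤ t.val → t.val < B + c → p (π t) = q ∧ k (π t) = κ) :
    U n p k v π (B + c) - U n p k v π B
      = v * q * c - κ * c * (1 - lam n p π B) + κ * q * (c * (c - 1) / 2) := by
  clear hc
  induction c with
  | zero => simp
  | succ c ih =>
    have hm : B + c < n := by omega
    have hconst' : ∀ t : Fin n, B ≤ t.val → t.val < B + c → p (π t) = q ∧ k (π t) = κ :=
      fun t h1 h2 => hconst t h1 (by omega)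
    have ih' := ih (by omega) hconst'
    have hstep := U_step n p k v π (B + c) hm
    have hla := lam_add n p π B c (by omega) q (fun t h1 h2 => (hconst' t h1 h2).1)
    obtain ⟨hpq, hkκ⟩ := hconst ⟨B + c, hm⟩ (by simp) (by simp)
    rw [hpq, hkκ, hla] at hstep
    have : U n p k v π (B + (c + 1)) - U n p k v π B
        = (U n p k v π ((B + c) + 1) - U n p k v π (B + c))
          + (U n p k v π (B + c) - U n p k v π B) := by
      rw [show B + (c + 1) = (B + c) + 1 from rfl]; ring
    rw [this, hstep, ih']
    push_cast
    ring
end
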